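/- Let c be an admissible edge weighting of Q_n and let x_1, x_2, y_1, y_2 form a square in Q_n with edges e = {x_1,y_1}, f = {x_2,y_1}, g = {x_2,y_2}, h = {x_1,y_2}. If c(e) ≠ 0 and c(f) ≠ 0, then also c(g) ≠ 0 and c(h) ≠ 0, and c(e)/c(f) = − conj( c(g)/c(h) ). -/
import Mathlib


open scoped Classical

noncomputable section

/-- Adjacency in the hypercube `Q_n`: differ in exactly one coordinate. -/
def hcAdj {n : ℕ} (x y : Fin n → Bool) : Prop :=
  (Finset.univ.filter (fun k => x k ≠ y k)).card = 1

/-- Flip the `k`-th coordinate. -/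
def hcFlip {n : ℕ} (x : Fin n → Bool) (k : Fin n) : Fin n → Bool :=
  Function.update x k (!x k)

/-- A vertex of `Q_n` is even if it has an even number of coordinates equal to `true`. -/
def hcEven {n : ℕ} (x : Fin n → Bool) : Prop :=
  (Finset.univ.filter (fun k => x k = true)).card % 2 = 0

/-- `i` belongs to `U_n(c)`: `i` is even and incident to an edge of nonzero weight. -/
def inU {n : ℕ} (c : (Fin n → Bool) → (Fin n → Bool) → ℂ) (i : Fin n → Bool) : Prop :=
  hcEven i ∧ ∃ j, hcAdj i j ∧ c i j ≠ 0

/-- `j` belongs to `V_n(c)`: `j` is odd and incident to an edge of nonzero weight. -/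
def inV {n : ℕ} (c : (Fin n → Bool) → (Fin n → Bool) → ℂ) (j : Fin n → Bool) : Prop :=
  ¬ hcEven j ∧ ∃ i, hcAdj i j ∧ c i j ≠ 0

/-- An edge weighting `c` of `Q_n` (with `c i j` the weight of the edge `{i,j}`,
`i` even, `j` odd) is admissible. -/
def Admissible {n : ℕ} (c : (Fin n → Bool) → (Fin n → Bool) → ℂ) : Prop :=
  (∀ j₁, inV c j₁ → ∀ j₂, inV c j₂ →
    ∑ i ∈ Finset.univ.filter (fun i => hcEven i ∧ hcAdj i j₁ ∧ hcAdj i j₂),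
      c i j₁ * (starRingEnd ℂ) (c i j₂) = if j₁ = j₂ then 1 else 0) ∧
  (∀ i₁, inU c i₁ → ∀ i₂, inU c i₂ →
    ∑ j ∈ Finset.univ.filter (fun j => ¬ hcEven j ∧ hcAdj i₁ j ∧ hcAdj i₂ j),
      c i₁ j * (starRingEnd ℂ) (c i₂ j) = if i₁ = i₂ then 1 else 0)

lemma hcAdj_unpack {n : ℕ} {x y : Fin n → Bool} (h : hcAdj x y) :
    ∃ a, x a ≠ y a ∧ ∀ m, m ≠ a → x m = y m := by
  obtain ⟨a, ha⟩ := Finset.card_eq_one.mp h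
  refine ⟨a, ?_, ?_⟩
  · have : a ∈ Finset.univ.filter (fun k => x k ≠ y k) := ha ▸ Finset.mem_singleton_self a
    simpa using this
  · intro m hm
    by_contra hmem
    have : m ∈ Finset.univ.filter (fun k => x k ≠ y k) := by simpa using hmem
    rw [ha, Finset.mem_singleton] at this
    exact hm this

lemma hcAdj_symm {n : ℕ} {x y : Fin n → Bool} (h : hcAdj x y) : hcAdj y x := by
  unfold hcAdj at h ⊢
  convert h using 2
  ext m
  simp [ne_comm]

lemma hcEven_flip {n : ℕ} (y : Fin n → Bool) (k : Fin n) :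
    hcEven (hcFlip y k) ↔ ¬ hcEven y := by
  unfold hcEven hcFlip
  cases hyk : y k with
  | false =>
    have hset : (Finset.univ.filter (fun m => Function.update y k (!y k) m = true))
        = insert k (Finset.univ.filter (fun m => y m = true)) := by
      ext m
      rcases eq_or_ne m k with rfl | hm
      · simp [Function.update_self, hyk]
      · simp [Function.update_of_ne hm, hm]
    have hk : k ∉ Finset.univ.filter (fun m => y m = true) := by simp [hyk]
    rw [hyk] at hset
    rw [hset, Finset.card_insert_of_notMem hk]
    omega
  | true =>
    have hset : (Finset.univ.filter (fun m => Function.update y k (!y k) m = true))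
        = (Finset.univ.filter (fun m => y m = true)).erase k := by
      ext m
      rcases eq_or_ne m k with rfl | hm
      · simp [Function.update_self, hyk]
      · simp [Function.update_of_ne hm, hm]
    have hk : k ∈ Finset.univ.filter (fun m => y m = true) := by simp [hyk]
    have hcard : 1 ≤ (Finset.univ.filter (fun m => y m = true)).card :=
      Finset.card_pos.mpr ⟨k, hk⟩
    rw [hyk] at hset
    rw [hset, Finset.card_erase_of_mem hk]
    omega

lemma bool_eq_of_ne {b b₁ b₂ : Bool} (h₁ : b₁ ≠ b) (h₂ : b₂ ≠ b) : b₁ = b₂ := by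
  cases b <;> cases b₁ <;> cases b₂ <;> simp_all

/-- Any common neighbour `z` of distinct same-parity vertices `y₁ y₂` differs from
`y₁` at a single coordinate `a`, from `y₂` at a single coordinate `b`, with `a ≠ b`,
and `y₁, y₂` differ at both `a` and `b`. -/
lemma common_step {n : ℕ} {y₁ y₂ z : Fin n → Bool} (hy : y₁ ≠ y₂)
    (hp : hcEven y₁ ↔ hcEven y₂) (h1 : hcAdj z y₁) (h2 : hcAdj z y₂) :
    ∃ a b, a ≠ b ∧ z a ≠ y₁ a ∧ (∀ m, m ≠ a → z m = y₁ m) ∧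
      z b ≠ y₂ b ∧ (∀ m, m ≠ b → z m = y₂ m) ∧ y₁ a ≠ y₂ a ∧ y₁ b ≠ y₂ b := by
  obtain ⟨a, ha, ha'⟩ := hcAdj_unpack h1
  obtain ⟨b, hb, hb'⟩ := hcAdj_unpack h2
  rcases eq_or_ne a b with rfl | hab
  · -- degenerate: y₂ would be the flip of y₁ at a, contradicting equal parity
    exfalso
    have hne : y₁ a ≠ y₂ a := by
      intro heq
      apply hy
      funext m
      rcases eq_or_ne m a with rfl | hm
      · exact heq
      · rw [← ha' m hm, hb' m hm]
    have h2f : y₂ = hcFlip y₁ a := by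
      funext m
      rcases eq_or_ne m a with rfl | hm
      · simp only [hcFlip, Function.update_self]
        exact bool_eq_of_ne (fun h => hne h.symm) (by simp)
      · simp only [hcFlip, Function.update_of_ne hm]
        rw [← ha' m hm, hb' m hm]
    rw [h2f, hcEven_flip] at hp
    tauto
  · refine ⟨a, b, hab, ha, ha', hb, hb', ?_, ?_⟩
    · rw [← hb' a hab]; exact fun h => ha h.symm
    · rw [← ha' b (Ne.symm hab)]; exact hb

/-- Two distinct same-parity vertices have at most two common neighbours. -/
lemma common_neighbors {n : ℕ} {y₁ y₂ i x₁ x₂ : Fin n → Bool}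
    (hy : y₁ ≠ y₂) (hp : hcEven y₁ ↔ hcEven y₂) (hx : x₁ ≠ x₂)
    (h1 : hcAdj x₁ y₁) (h2 : hcAdj x₁ y₂) (h3 : hcAdj x₂ y₁) (h4 : hcAdj x₂ y₂)
    (hi1 : hcAdj i y₁) (hi2 : hcAdj i y₂) : i = x₁ ∨ i = x₂ := by
  obtain ⟨a, b, hab, hia, hia', hib, hib', hda, hdb⟩ := common_step hy hp hi1 hi2
  obtain ⟨a₁, b₁, hab₁, h1a, h1a', h1b, h1b', hd1a, hd1b⟩ := common_step hy hp h1 h2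
  obtain ⟨a₂, b₂, hab₂, h2a, h2a', h2b, h2b', hd2a, hd2b⟩ := common_step hy hp h3 h4
  -- any coordinate where y₁ and y₂ differ lies in {a, b}
  have hD : ∀ m, y₁ m ≠ y₂ m → m = a ∨ m = b := by
    intro m hm
    by_contra hcon
    push_neg at hcon
    exact hm (by rw [← hia' m hcon.1, hib' m hcon.2])
  -- vertices flipping y₁ at the same coordinate are equal
  have key : ∀ (u v : Fin n → Bool) (k : Fin n), u k ≠ y₁ k → (∀ m, m ≠ k → u m = y₁ m) →
      v k ≠ y₁ k → (∀ m, m ≠ k → v m = y₁ m) → u = v := by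
    intro u v k hu hu' hv hv'
    funext m
    rcases eq_or_ne m k with rfl | hm
    · exact bool_eq_of_ne hu hv
    · rw [hu' m hm, hv' m hm]
  have ha₁ : a₁ = a ∨ a₁ = b := hD a₁ hd1a
  have ha₂ : a₂ = a ∨ a₂ = b := hD a₂ hd2a
  have h12 : a₁ ≠ a₂ := by
    intro heq
    exact hx (key x₁ x₂ a₁ h1a h1a' (heq ▸ h2a) (heq ▸ h2a'))
  have : a = a₁ ∨ a = a₂ := by
    rcases ha₁ with rfl | rfl
    · left; rfl
    · rcases ha₂ with rfl | rfl
      · right; rfl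
      · exact absurd rfl h12
  rcases this with rfl | rfl
  · exact Or.inl (key i x₁ _ hia hia' h1a h1a')
  · exact Or.inr (key i x₂ _ hia hia' h2a h2a')

/-- Let `c` be an admissible edge weighting of `Q_n` and let
`x₁, x₂, y₁, y₂` form a square in `Q_n` with edges `e = {x₁,y₁}`, `f = {x₂,y₁}`,
`g = {x₂,y₂}`, `h = {x₁,y₂}`.  If `c(e) ≠ 0` and `c(f) ≠ 0` then `c(g) ≠ 0`,
`c(h) ≠ 0`, and `c(e)/c(f) = − conj(c(g)/c(h))`. -/
theorem admissible_square_ratio {n : ℕ} (hn : 1 ≤ n)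
    (c : (Fin n → Bool) → (Fin n → Bool) → ℂ) (hadm : Admissible c)
    (x₁ x₂ y₁ y₂ : Fin n → Bool)
    (he₁ : hcEven x₁) (he₂ : hcEven x₂) (ho₁ : ¬ hcEven y₁) (ho₂ : ¬ hcEven y₂)
    (hx : x₁ ≠ x₂) (hy : y₁ ≠ y₂)
    (h11 : hcAdj x₁ y₁) (h21 : hcAdj x₂ y₁) (h22 : hcAdj x₂ y₂) (h12 : hcAdj x₁ y₂)
    (hce : c x₁ y₁ ≠ 0) (hcf : c x₂ y₁ ≠ 0) :
    c x₂ y₂ ≠ 0 ∧ c x₁ y₂ ≠ 0 ∧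
      c x₁ y₁ / c x₂ y₁ = - (starRingEnd ℂ) (c x₂ y₂ / c x₁ y₂) := by
  classical
  -- The common odd neighbours of x₁ and x₂ are exactly y₁ and y₂
  have hFU : Finset.univ.filter (fun j => ¬ hcEven j ∧ hcAdj x₁ j ∧ hcAdj x₂ j)
      = {y₁, y₂} := by
    ext j
    simp only [Finset.mem_filter, Finset.mem_univ, true_and, Finset.mem_insert,
      Finset.mem_singleton]
    constructor
    · rintro ⟨-, hj1, hj2⟩
      exact common_neighbors hx (iff_of_true he₁ he₂) hy
        (hcAdj_symm h11) (hcAdj_symm h21) (hcAdj_symm h12) (hcAdj_symm h22)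
        (hcAdj_symm hj1) (hcAdj_symm hj2)
    · rintro (rfl | rfl)
      · exact ⟨ho₁, h11, h21⟩
      · exact ⟨ho₂, h12, h22⟩
  have hFV : Finset.univ.filter (fun i => hcEven i ∧ hcAdj i y₁ ∧ hcAdj i y₂)
      = {x₁, x₂} := by
    ext i
    simp only [Finset.mem_filter, Finset.mem_univ, true_and, Finset.mem_insert,
      Finset.mem_singleton]
    constructor
    · rintro ⟨-, hi1, hi2⟩
      exact common_neighbors hy (iff_of_false ho₁ ho₂) hx h11 h12 h21 h22 hi1 hi2
    · rintro (rfl | rfl)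
      · exact ⟨he₁, h11, h12⟩
      · exact ⟨he₂, h21, h22⟩
  have hU1 : inU c x₁ := ⟨he₁, y₁, h11, hce⟩
  have hU2 : inU c x₂ := ⟨he₂, y₁, h21, hcf⟩
  have eqU := hadm.2 x₁ hU1 x₂ hU2
  rw [hFU, if_neg hx, Finset.sum_pair hy] at eqU
  -- eqU : c x₁ y₁ * conj (c x₂ y₁) + c x₁ y₂ * conj (c x₂ y₂) = 0
  have hterm : c x₁ y₂ * (starRingEnd ℂ) (c x₂ y₂) ≠ 0 := by
    intro h0
    rw [h0, add_zero] at eqU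
    exact (mul_ne_zero hce ((map_ne_zero _).mpr hcf)) eqU
  have hg : c x₂ y₂ ≠ 0 := fun h0 => hterm (by rw [h0, map_zero, mul_zero])
  have hh : c x₁ y₂ ≠ 0 := fun h0 => hterm (by rw [h0, zero_mul])
  refine ⟨hg, hh, ?_⟩
  have hV1 : inV c y₁ := ⟨ho₁, x₁, h11, hce⟩
  have hV2 : inV c y₂ := ⟨ho₂, x₂, h22, hg⟩
  have eqV := hadm.1 y₁ hV1 y₂ hV2
  rw [hFV, if_neg hy, Finset.sum_pair hx] at eqV
  -- eqV : c x₁ y₁ * conj (c x₁ y₂) + c x₂ y₁ * conj (c x₂ y₂) = 0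
  have hh' : (starRingEnd ℂ) (c x₁ y₂) ≠ 0 := (map_ne_zero _).mpr hh
  rw [map_div₀]
  field_simp
  linear_combination eqV
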